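/- For n ≥ 3, the τ-graph of the Lucas cube Λ_n is the cycle C_n on n vertices: the Θ-class X_i (edges flipping coordinate i) is adjacent in the τ-graph precisely to X_{i-1} and X_{i+1} (indices modulo n). -/

import Mathlib

open SimpleGraph Function

/-- The hypercube graph `Q_n` on binary strings of length `n`. -/
def cubeGraph (n : ℕ) : SimpleGraph (Fin n → Bool) where
  Adj u v := hammingDist u v = 1
  symm := ⟨fun u v h => by simpa [hammingDist_comm] using h⟩
  loopless := ⟨fun u h => by simp [hammingDist_self] at h⟩

/-- The downward closure of a set of binary strings under the coordinatewise order. -/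
def dClosure {n : ℕ} (X : Set (Fin n → Bool)) : Set (Fin n → Bool) :=
  {u | ∃ x ∈ X, u ≤ x}

/-- The daisy cube `Q_n(X)`: the subgraph of `Q_n` induced by the downward closure of `X`. -/
def daisyCube (n : ℕ) (X : Set (Fin n → Bool)) : SimpleGraph (dClosure X) :=
  (cubeGraph n).induce (dClosure X)

/-- The τ-graph of a (coordinatized) partial cube `G ⊆ Q_n`, with Θ-classes identified with the
coordinates: two classes are adjacent iff incident edges, one flipping each coordinate, form a
convex path on three vertices. -/
def coordTau {n : ℕ} {V : Type*} (val : V → (Fin n → Bool)) (G : SimpleGraph V) :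
    SimpleGraph (Fin n) where
  Adj i j := i ≠ j ∧ ∃ u v w : V, G.Adj u v ∧ G.Adj v w ∧
      val u i ≠ val v i ∧ val v j ≠ val w j ∧
      ¬ G.Adj u w ∧ ∀ x : V, G.Adj u x → G.Adj w x → x = v
  symm := by
    constructor
    rintro i j ⟨hij, u, v, w, h1, h2, h3, h4, h5, h6⟩
    exact ⟨hij.symm, w, v, u, h2.symm, h1.symm, fun h => h4 h.symm, fun h => h3 h.symm,
      fun h => h5 h.symm, fun x hw hu => h6 x hu hw⟩
  loopless := by
    constructor
    rintro i ⟨hij, _⟩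
    exact hij rfl

/-- Binary strings of length `n` with no two cyclically consecutive 1's. -/
def lucasSet (n : ℕ) : Set (Fin n → Bool) :=
  {u | ∀ i j : Fin n, ((i : ℕ) + 1) % n = (j : ℕ) → ¬(u i = true ∧ u j = true)}

/-- The Lucas cube `Λ_n`. -/
def lucasCube (n : ℕ) : SimpleGraph (lucasSet n) :=
  (cubeGraph n).induce (lucasSet n)

/-!
In a subgraph of `Q_n` induced by a set `S`, coordinates `i ≠ j` are τ-adjacent exactly when some
square of `Q_n` in directions `i, j` has precisely three corners in `S`: two vertices at distance
two in `Q_n` have just the two middle corners of their square as common neighbours, so the path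
through one of them is convex iff the other is missing. For the Lucas cube, a missing corner `x`
contains a cyclically consecutive pair of 1's, and flipping `i` as well as flipping `j` must
destroy that pair, so `{i, j}` is the pair. Conversely, for consecutive `i, j` the square
`0, e_i, e_j, e_i + e_j` has only its top corner missing.
-/

section FlipCoord

variable {ι : Type*} [DecidableEq ι]

def flipCoord (u : ι → Bool) (k : ι) : ι → Bool :=
  Function.update u k (!u k)

@[simp]
lemma flipCoord_apply_self (u : ι → Bool) (k : ι) : flipCoord u k k = !u k := by
  simp [flipCoord]

@[simp]
lemma flipCoord_apply_of_ne (u : ι → Bool) {k l : ι} (h : l ≠ k) : flipCoord u k l = u l := by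
  simp [flipCoord, h]

lemma flipCoord_apply_ne_iff (u : ι → Bool) (k l : ι) : flipCoord u k l ≠ u l ↔ l = k := by
  by_cases h : l = k
  · subst h; simp
  · simp [h]

@[simp]
lemma flipCoord_flipCoord_self (u : ι → Bool) (k : ι) : flipCoord (flipCoord u k) k = u := by
  funext l
  by_cases h : l = k
  · subst h; simp
  · simp [h]

lemma flipCoord_comm (u : ι → Bool) (i j : ι) :
    flipCoord (flipCoord u i) j = flipCoord (flipCoord u j) i := by
  funext l
  by_cases hi : l = i <;> by_cases hj : l = j <;> subst_vars <;> simp [*]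

lemma flipCoord_ne_flipCoord {i j : ι} (hij : i ≠ j) (u : ι → Bool) :
    flipCoord u i ≠ flipCoord u j := fun h => by
  simpa [hij] using congrFun h i

lemma hammingDist_eq_one_iff_exists_flipCoord [Fintype ι] (u v : ι → Bool) :
    hammingDist u v = 1 ↔ ∃ k, v = flipCoord u k := by
  rw [hammingDist, Finset.card_eq_one]
  refine exists_congr fun k => ⟨fun h => ?_, fun h => ?_⟩
  · funext l
    have hl := Finset.ext_iff.mp h l
    simp only [Finset.mem_filter, Finset.mem_univ, true_and, Finset.mem_singleton] at hl
    by_cases hlk : l = k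
    · subst hlk
      cases hu : u l <;> cases hv : v l <;> simp_all
    · simp only [hlk, iff_false, not_not] at hl
      simp [hlk, hl]
  · ext l
    simp [h, ← flipCoord_apply_ne_iff u k l, ne_comm]

end FlipCoord

section CubeGraph

variable {n : ℕ}

lemma cubeGraph_adj_iff_exists_flipCoord (u v : Fin n → Bool) :
    (cubeGraph n).Adj u v ↔ ∃ k, v = flipCoord u k :=
  hammingDist_eq_one_iff_exists_flipCoord u v

lemma cubeGraph_adj_flipCoord (u : Fin n → Bool) (k : Fin n) :
    (cubeGraph n).Adj u (flipCoord u k) :=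
  (cubeGraph_adj_iff_exists_flipCoord _ _).mpr ⟨k, rfl⟩

lemma not_cubeGraph_adj_flipCoord_flipCoord {i j : Fin n} (hij : i ≠ j) (u : Fin n → Bool) :
    ¬ (cubeGraph n).Adj u (flipCoord (flipCoord u i) j) := by
  rintro h
  obtain ⟨k, hk⟩ := (cubeGraph_adj_iff_exists_flipCoord _ _).mp h
  have hki : k = i := by
    by_contra hki
    simpa [hij, Ne.symm hki] using congrFun hk i
  subst hki
  simpa [hij] using congrFun hk j

lemma eq_flipCoord_or_eq_flipCoord_of_cubeGraph_adj {i j : Fin n} (hij : i ≠ j)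
    {u y : Fin n → Bool} (huy : (cubeGraph n).Adj u y)
    (hwy : (cubeGraph n).Adj (flipCoord (flipCoord u i) j) y) :
    y = flipCoord u i ∨ y = flipCoord u j := by
  obtain ⟨a, rfl⟩ := (cubeGraph_adj_iff_exists_flipCoord _ _).mp huy
  obtain ⟨b, hb⟩ := (cubeGraph_adj_iff_exists_flipCoord _ _).mp hwy.symm
  suffices a = i ∨ a = j by rcases this with rfl | rfl <;> simp
  by_contra! ha
  by_cases hba : b = a
  · subst hba
    simpa [hij] using congrFun hb i
  · simpa [ha.1, ha.2, Ne.symm hba] using congrFun hb a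

end CubeGraph

lemma coordTau_induce_cubeGraph_adj_iff {n : ℕ} (S : Set (Fin n → Bool)) (i j : Fin n) :
    (coordTau Subtype.val ((cubeGraph n).induce S)).Adj i j ↔
      i ≠ j ∧ ∃ x ∉ S, flipCoord x i ∈ S ∧ flipCoord x j ∈ S ∧
        flipCoord (flipCoord x i) j ∈ S := by
  constructor
  · rintro ⟨hij, ⟨u, hu⟩, ⟨v, hv⟩, ⟨w, hw⟩, huv, hvw, hi, hj, -, huniq⟩
    rw [induce_adj] at huv hvw
    obtain ⟨a, rfl⟩ := (cubeGraph_adj_iff_exists_flipCoord _ _).mp huv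
    obtain rfl := ((flipCoord_apply_ne_iff u a i).mp (Ne.symm hi))
    obtain ⟨b, rfl⟩ := (cubeGraph_adj_iff_exists_flipCoord _ _).mp hvw
    obtain rfl := ((flipCoord_apply_ne_iff _ b j).mp (Ne.symm hj))
    refine ⟨hij, flipCoord u j, fun hx => ?_, flipCoord_comm u i j ▸ hw, by simpa using hu, ?_⟩
    · have := huniq ⟨flipCoord u j, hx⟩ (cubeGraph_adj_flipCoord u j)
        (induce_adj.mpr <| by
          simpa [flipCoord_comm u i j] using (cubeGraph_adj_flipCoord (flipCoord u j) i).symm)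
      exact flipCoord_ne_flipCoord hij u (congrArg Subtype.val this).symm
    · rwa [flipCoord_comm, flipCoord_flipCoord_self]
  · rintro ⟨hij, x, hx, hxi, hxj, hxij⟩
    obtain ⟨u, rfl⟩ : ∃ u, x = flipCoord u j := ⟨flipCoord x j, by simp⟩
    rw [flipCoord_flipCoord_self] at hxj
    rw [flipCoord_comm, flipCoord_flipCoord_self] at hxij
    rw [flipCoord_comm] at hxi
    refine ⟨hij, ⟨u, hxj⟩, ⟨flipCoord u i, hxij⟩, ⟨_, hxi⟩, cubeGraph_adj_flipCoord u i,
      cubeGraph_adj_flipCoord _ j, by simp, by simp, not_cubeGraph_adj_flipCoord_flipCoord hij u,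
      ?_⟩
    rintro ⟨y, hy⟩ huy hwy
    rcases eq_flipCoord_or_eq_flipCoord_of_cubeGraph_adj hij huy hwy with rfl | rfl
    · rfl
    · exact absurd hy hx

section LucasCube

variable {n : ℕ}

lemma ne_of_add_one_mod_eq (hn : 2 ≤ n) {a b : Fin n} (hab : ((a : ℕ) + 1) % n = b) : a ≠ b := by
  rintro rfl
  rcases Nat.lt_or_ge ((a : ℕ) + 1) n with h | h
  · rw [Nat.mod_eq_of_lt h] at hab
    omega
  · rw [show (a : ℕ) + 1 = n by omega, Nat.mod_self] at hab
    omega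

lemma flipCoord_false_mem_lucasSet (hn : 2 ≤ n) (k : Fin n) :
    flipCoord (fun _ => false) k ∈ lucasSet n := by
  rintro a b hab ⟨ha, hb⟩
  have hak : a = k := by by_contra h; simp [h] at ha
  have hbk : b = k := by by_contra h; simp [h] at hb
  exact ne_of_add_one_mod_eq hn hab (hak.trans hbk.symm)

lemma eq_or_eq_of_flipCoord_mem_lucasSet {x : Fin n → Bool} {a b : Fin n}
    (hab : ((a : ℕ) + 1) % n = b) (ha : x a = true) (hb : x b = true) {k : Fin n}
    (hk : flipCoord x k ∈ lucasSet n) : k = a ∨ k = b := by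
  by_contra! h
  exact hk a b hab ⟨by simp [h.1.symm, ha], by simp [h.2.symm, hb]⟩

lemma lucasCube_tau_adj_of_add_one_mod_eq (hn : 2 ≤ n) {i j : Fin n}
    (h : ((i : ℕ) + 1) % n = j) : (coordTau Subtype.val (lucasCube n)).Adj i j := by
  have hij := ne_of_add_one_mod_eq hn h
  rw [lucasCube, coordTau_induce_cubeGraph_adj_iff]
  refine ⟨hij, flipCoord (flipCoord (fun _ => false) i) j,
    fun hx => hx i j h ⟨by simp [hij], by simp [hij.symm]⟩, ?_, ?_, ?_⟩
  · rw [flipCoord_comm, flipCoord_flipCoord_self]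
    exact flipCoord_false_mem_lucasSet hn j
  · rw [flipCoord_flipCoord_self]
    exact flipCoord_false_mem_lucasSet hn i
  · rw [flipCoord_comm _ j i, flipCoord_flipCoord_self, flipCoord_flipCoord_self]
    rintro a b - ⟨ha, -⟩
    simp at ha

lemma add_one_mod_eq_or_of_lucasCube_tau_adj {i j : Fin n}
    (h : (coordTau Subtype.val (lucasCube n)).Adj i j) :
    ((i : ℕ) + 1) % n = j ∨ ((j : ℕ) + 1) % n = i := by
  rw [lucasCube, coordTau_induce_cubeGraph_adj_iff] at h
  obtain ⟨hij, x, hx, hxi, hxj, -⟩ := h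
  obtain ⟨a, b, hab, ha, hb⟩ : ∃ a b : Fin n, ((a : ℕ) + 1) % n = b ∧ x a = true ∧ x b = true := by
    simpa [lucasSet] using hx
  rcases eq_or_eq_of_flipCoord_mem_lucasSet hab ha hb hxi with rfl | rfl <;>
    rcases eq_or_eq_of_flipCoord_mem_lucasSet hab ha hb hxj with rfl | rfl
  exacts [absurd rfl hij, .inl hab, .inr hab, absurd rfl hij]

end LucasCube

/-- For `n ≥ 3`, the τ-graph of the Lucas cube `Λ_n` is the cycle `C_n`:
the Θ-class `X_i` of edges flipping coordinate `i` is adjacent in the τ-graph precisely to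
`X_{i-1}` and `X_{i+1}` (indices modulo `n`). -/
theorem lucasCube_tau_eq_cycle (n : ℕ) (hn : 3 ≤ n) (i j : Fin n) :
    (coordTau (Subtype.val) (lucasCube n)).Adj i j ↔
      (((i : ℕ) + 1) % n = (j : ℕ) ∨ ((j : ℕ) + 1) % n = (i : ℕ)) := by
  refine ⟨add_one_mod_eq_or_of_lucasCube_tau_adj, ?_⟩
  rintro (h | h)
  · exact lucasCube_tau_adj_of_add_one_mod_eq (by omega) h
  · exact (lucasCube_tau_adj_of_add_one_mod_eq (by omega) h).symm
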